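/- arXiv:2109.03267 — 8 statements merged into one kernel-verified Lean document; each statement's English description precedes it below -/
import Mathlib

section
/- Let n ≥ 1 and let A ∈ M_n(ℂ) be upper triangular with Tr(A) a nonnegative real number, and let S ∈ M_n(ℂ) be Hermitian and upper triangular (hence diagonal with real entries) with Re(A) ≤ S. Let (A_m)_{m≥1} be a sequence of strictly upper triangular matrices in M_n(ℂ) with ‖A_m‖ ≤ 1 for every m. Set α_0 = Tr(A) and α_m = Tr(A A_m*) for m ≥ 1. Then for every real r with 0 ≤ r ≤ 1/3, the series ∑_{m=0}^∞ |α_m| r^m converges and ∑_{m=0}^∞ |α_m| r^m ≤ Tr(S). -/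
/-!
Put `P = S - Re A`, which is positive semidefinite. In `Tr (A Bᴴ)` with `B` strictly upper
triangular only the strictly upper part of `A` contributes, and there `P = -A/2` because `S` is
diagonal; so `α m = -2 Tr (P Bᴴ)`. Writing `P = Cᴴ C`, `Tr (P X)` is a sum of quadratic forms
`⟨cᵢ, X cᵢ⟩`, whence `|α m| ≤ 2 ‖B‖ Tr P ≤ 2 Tr P`. With `α 0 = Tr A ≥ 0` this gives
`∑ |α m| rᵐ ≤ Tr A + 2 Tr P · r / (1 - r) ≤ Tr A + Tr P = Tr S` as soon as `r ≤ 1/3`.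
-/

open Matrix
open scoped Matrix.Norms.L2Operator ComplexOrder

namespace Matrix

section Trace

variable {ι : Type*} [Fintype ι] [LinearOrder ι]

theorem trace_mul_conjTranspose_eq_zero {R : Type*} [Semiring R] [StarRing R]
    {M N : Matrix ι ι R} (hM : ∀ i j, i < j → M i j = 0) (hN : ∀ i j, j ≤ i → N i j = 0) :
    (M * Nᴴ).trace = 0 := by
  refine Finset.sum_eq_zero fun i _ => Finset.sum_eq_zero fun j _ => ?_
  rcases lt_or_ge i j with hij | hji
  · simp [hM i j hij]
  · simp [hN i j hji]

theorem trace_mul_conjTranspose_eq_neg_two_mul {K : Type*} [Field K] [StarRing K] [CharZero K]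
    {A S N : Matrix ι ι K} (hA : ∀ i j, j < i → A i j = 0) (hS : ∀ i j, i < j → S i j = 0)
    (hN : ∀ i j, j ≤ i → N i j = 0) :
    (A * Nᴴ).trace = -2 * ((S - (2 : K)⁻¹ • (A + Aᴴ)) * Nᴴ).trace := by
  have hAH : ∀ i j, i < j → Aᴴ i j = 0 := fun i j hij => by
    rw [conjTranspose_apply, hA j i hij, star_zero]
  rw [sub_mul, trace_sub, smul_mul, trace_smul, add_mul, trace_add,
    trace_mul_conjTranspose_eq_zero hS hN, trace_mul_conjTranspose_eq_zero hAH hN, smul_eq_mul]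
  ring

end Trace

section Norm

variable {ι 𝕜 : Type*} [Fintype ι] [DecidableEq ι] [RCLike 𝕜]

theorem norm_star_dotProduct_mulVec_le (X : Matrix ι ι 𝕜) (u : ι → 𝕜) :
    ‖star u ⬝ᵥ X *ᵥ u‖ ≤ ‖X‖ * RCLike.re (star u ⬝ᵥ u) := by
  set v : EuclideanSpace 𝕜 ι := WithLp.toLp 2 u
  have hXu : star u ⬝ᵥ X *ᵥ u = inner 𝕜 v ((EuclideanSpace.equiv ι 𝕜).symm (X *ᵥ u)) := by
    rw [dotProduct_comm]; rfl
  have hu : RCLike.re (star u ⬝ᵥ u) = ‖v‖ ^ 2 := by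
    rw [dotProduct_comm, ← EuclideanSpace.inner_toLp_toLp, inner_self_eq_norm_sq]
  rw [hXu, hu]
  calc _ ≤ ‖v‖ * ‖(EuclideanSpace.equiv ι 𝕜).symm (X *ᵥ u)‖ := norm_inner_le_norm _ _
    _ ≤ ‖v‖ * (‖X‖ * ‖v‖) := by gcongr; exact l2_opNorm_mulVec X v
    _ = ‖X‖ * ‖v‖ ^ 2 := by ring

theorem norm_trace_conjTranspose_mul_self_mul_le (C X : Matrix ι ι 𝕜) :
    ‖(Cᴴ * C * X).trace‖ ≤ ‖X‖ * RCLike.re (Cᴴ * C).trace := by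
  have hrow : ∀ i, C i = star (Cᴴᵀ i) := fun i => by ext; simp
  have hCXC : (Cᴴ * C * X).trace = ∑ i, star (Cᴴᵀ i) ⬝ᵥ X *ᵥ Cᴴᵀ i := by
    rw [Matrix.mul_assoc, trace_mul_comm, trace]
    simp only [diag, mul_mul_apply, ← hrow]
  have hCC : (Cᴴ * C).trace = ∑ i, star (Cᴴᵀ i) ⬝ᵥ Cᴴᵀ i := by
    rw [trace_mul_comm, trace]
    simp only [diag, mul_apply', ← hrow]
    rfl
  rw [hCXC, hCC, map_sum, Finset.mul_sum]
  exact (norm_sum_le _ _).trans (Finset.sum_le_sum fun i _ => norm_star_dotProduct_mulVec_le X _)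

theorem PosSemidef.exists_eq_conjTranspose_mul_self {P : Matrix ι ι 𝕜} (hP : P.PosSemidef) :
    ∃ C : Matrix ι ι 𝕜, P = Cᴴ * C := by
  open scoped MatrixOrder in
  exact ⟨CFC.sqrt P, by
    rw [← star_eq_conjTranspose, (CFC.sqrt_nonneg P).isSelfAdjoint.star_eq,
      CFC.sqrt_mul_sqrt_self P hP.nonneg]⟩

theorem PosSemidef.norm_trace_mul_le {P : Matrix ι ι 𝕜} (hP : P.PosSemidef)
    (X : Matrix ι ι 𝕜) : ‖(P * X).trace‖ ≤ ‖X‖ * RCLike.re P.trace := by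
  obtain ⟨C, rfl⟩ := hP.exists_eq_conjTranspose_mul_self
  exact norm_trace_conjTranspose_mul_self_mul_le C X

end Norm

end Matrix

theorem summable_and_tsum_mul_pow_le {c : ℕ → ℝ} {a t r : ℝ} (hc : ∀ m, 0 ≤ c m)
    (hc0 : c 0 ≤ a) (hc_succ : ∀ m, c (m + 1) ≤ 2 * t) (hr0 : 0 ≤ r) (hr : r ≤ 1 / 3) :
    Summable (fun m => c m * r ^ m) ∧ ∑' m, c m * r ^ m ≤ a + t := by
  have hr1 : r < 1 := by linarith
  have ht : 0 ≤ t := by linarith [hc 1, hc_succ 0]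
  have hgeo : Summable fun m : ℕ => r ^ m := summable_geometric_of_lt_one hr0 hr1
  have htail_le : ∀ m, c (m + 1) * r ^ (m + 1) ≤ 2 * t * r * r ^ m := fun m => by
    rw [pow_succ']
    have := mul_le_mul_of_nonneg_right (hc_succ m) (mul_nonneg hr0 (pow_nonneg hr0 m))
    linarith
  have htail : Summable fun m => c (m + 1) * r ^ (m + 1) :=
    (hgeo.mul_left _).of_nonneg_of_le (fun m => by have := hc (m + 1); positivity) htail_le
  have hsum : Summable fun m => c m * r ^ m := (summable_nat_add_iff 1).mp htail
  refine ⟨hsum, ?_⟩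
  calc ∑' m, c m * r ^ m = c 0 + ∑' m, c (m + 1) * r ^ (m + 1) := by
        rw [hsum.tsum_eq_zero_add, pow_zero, mul_one]
    _ ≤ a + 2 * t * r * (1 - r)⁻¹ := by
        rw [← tsum_geometric_of_lt_one hr0 hr1, ← tsum_mul_left]
        exact add_le_add hc0 (htail.tsum_le_tsum htail_le (hgeo.mul_left _))
    _ ≤ a + t := by
        have : 2 * r * (1 - r)⁻¹ ≤ 1 := by
          rw [← div_eq_mul_inv, div_le_one (by linarith)]; linarith
        nlinarith

theorem bohr_matrix_upper_triangular_general {n : ℕ}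
    (A S : Matrix (Fin n) (Fin n) ℂ)
    (hA_ut : ∀ i j : Fin n, j < i → A i j = 0)
    (hA_tr : 0 ≤ A.trace)
    (hS_herm : S.IsHermitian)
    (hS_ut : ∀ i j : Fin n, j < i → S i j = 0)
    (hAS : (S - (2 : ℂ)⁻¹ • (A + Aᴴ)).PosSemidef)
    (B : ℕ → Matrix (Fin n) (Fin n) ℂ)
    (hB_sut : ∀ m : ℕ, 1 ≤ m → ∀ i j : Fin n, j ≤ i → B m i j = 0)
    (hB_norm : ∀ m : ℕ, 1 ≤ m → ‖B m‖ ≤ 1)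
    (α : ℕ → ℂ)
    (hα0 : α 0 = A.trace)
    (hα : ∀ m : ℕ, 1 ≤ m → α m = (A * (B m)ᴴ).trace)
    (r : ℝ) (hr0 : 0 ≤ r) (hr1 : r ≤ 1 / 3) :
    Summable (fun m : ℕ => ‖α m‖ * r ^ m) ∧
      ∑' m : ℕ, ‖α m‖ * r ^ m ≤ S.trace.re := by
  set P := S - (2 : ℂ)⁻¹ • (A + Aᴴ)
  have hS_lt : ∀ i j, i < j → S i j = 0 := fun i j hij => by
    rw [← hS_herm.apply, hS_ut j i hij, star_zero]
  have hP_tr : 0 ≤ P.trace.re := (Complex.nonneg_iff.mp hAS.trace_nonneg).1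
  have hα_le : ∀ m, ‖α (m + 1)‖ ≤ 2 * P.trace.re := fun m => by
    have hB_adj : ‖(B (m + 1))ᴴ‖ ≤ 1 := by
      rw [l2_opNorm_conjTranspose]; exact hB_norm (m + 1) m.succ_pos
    rw [hα (m + 1) m.succ_pos,
      trace_mul_conjTranspose_eq_neg_two_mul hA_ut hS_lt (hB_sut (m + 1) m.succ_pos)]
    calc ‖-2 * (P * (B (m + 1))ᴴ).trace‖ = 2 * ‖(P * (B (m + 1))ᴴ).trace‖ := by
          rw [norm_mul]; norm_num
      _ ≤ 2 * (‖(B (m + 1))ᴴ‖ * P.trace.re) := by gcongr; exact hAS.norm_trace_mul_le _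
      _ ≤ 2 * P.trace.re := by nlinarith
  have hS_tr : S.trace.re = A.trace.re + P.trace.re := by
    rw [trace_sub, trace_smul, trace_add, trace_conjTranspose, RCLike.star_def, Complex.add_conj,
      smul_eq_mul, Complex.ofReal_mul, Complex.ofReal_ofNat, inv_mul_cancel_left₀ two_ne_zero,
      Complex.sub_re, Complex.ofReal_re]
    ring
  rw [hS_tr]
  exact summable_and_tsum_mul_pow_le (fun m => norm_nonneg _)
    (by rw [hα0, Complex.re_eq_norm.mpr hA_tr]) hα_le hr0 hr1

/-- **Bohr's inequality for upper triangular matrices** (general `n`, radius `1/3`). -/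
theorem bohr_matrix_upper_triangular {n : ℕ} (hn : 1 ≤ n)
    (A S : Matrix (Fin n) (Fin n) ℂ)
    (hA_ut : ∀ i j : Fin n, j < i → A i j = 0)
    (hA_tr : 0 ≤ A.trace)
    (hS_herm : S.IsHermitian)
    (hS_ut : ∀ i j : Fin n, j < i → S i j = 0)
    (hAS : (S - (2 : ℂ)⁻¹ • (A + Aᴴ)).PosSemidef)
    (B : ℕ → Matrix (Fin n) (Fin n) ℂ)
    (hB_sut : ∀ m : ℕ, 1 ≤ m → ∀ i j : Fin n, j ≤ i → B m i j = 0)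
    (hB_norm : ∀ m : ℕ, 1 ≤ m → ‖B m‖ ≤ 1)
    (α : ℕ → ℂ)
    (hα0 : α 0 = A.trace)
    (hα : ∀ m : ℕ, 1 ≤ m → α m = (A * (B m)ᴴ).trace)
    (r : ℝ) (hr0 : 0 ≤ r) (hr1 : r ≤ 1 / 3) :
    Summable (fun m : ℕ => ‖α m‖ * r ^ m) ∧
      ∑' m : ℕ, ‖α m‖ * r ^ m ≤ S.trace.re :=
  bohr_matrix_upper_triangular_general A S hA_ut hA_tr hS_herm hS_ut hAS B hB_sut hB_norm α hα0 hα r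
    hr0 hr1
end

section
/- Let A ∈ M_2(ℂ) be upper triangular with Tr(A) a nonnegative real number, and let S ∈ M_2(ℂ) be Hermitian and upper triangular (hence diagonal with real entries) with Re(A) ≤ S. Let (A_m)_{m≥1} be a sequence of strictly upper triangular matrices in M_2(ℂ) with ‖A_m‖ ≤ 1 for every m. Set α_0 = Tr(A) and α_m = Tr(A A_m*) for m ≥ 1. Then for every real r with 0 ≤ r ≤ 1/2, the series ∑_{m=0}^∞ |α_m| r^m converges and ∑_{m=0}^∞ |α_m| r^m ≤ Tr(S). -/
open Matrix
open scoped Matrix.Norms.L2Operator ComplexOrder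

/-!
Write `A = !![a, b; 0, d]`. A strictly upper triangular `B` has only the entry `B 0 1`, of modulus
at most `‖B‖`, so `|Tr (A Bᴴ)| = |b| |B 0 1| ≤ |b|`. The positive semidefinite matrix `S - Re A` has
entry `-b̄/2` below the diagonal, so its determinant bounds the product of its (nonnegative)
diagonal entries below by `|b|²/4`, and AM–GM gives `Tr S - Re Tr A ≥ |b|`. Finally
`∑_{m ≥ 1} r^m = r/(1-r) ≤ 1` for `r ≤ 1/2`.
-/

namespace Matrix

variable {𝕜 : Type*} [RCLike 𝕜]

theorem norm_apply_le_l2_opNorm {m n : Type*} [Fintype m] [Fintype n] [DecidableEq n]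
    (A : Matrix m n 𝕜) (i : m) (j : n) : ‖A i j‖ ≤ ‖A‖ := by
  have hcol := A.l2_opNorm_mulVec (EuclideanSpace.single j 1)
  rw [PiLp.norm_single, norm_one, mul_one] at hcol
  refine le_trans ?_ hcol
  simpa using PiLp.norm_apply_le ((EuclideanSpace.equiv m 𝕜).symm (A *ᵥ Pi.single j 1)) i

theorem trace_mul_conjTranspose_fin_two_of_strictUpper {R : Type*} [CommSemiring R] [StarRing R]
    (A B : Matrix (Fin 2) (Fin 2) R) (hB : ∀ i j, j ≤ i → B i j = 0) :
    (A * Bᴴ).trace = A 0 1 * star (B 0 1) := by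
  simp [trace_fin_two, mul_apply, Fin.sum_univ_two, hB 0 0 le_rfl, hB 1 0 zero_le_one,
    hB 1 1 le_rfl]

theorem PosSemidef.two_mul_norm_apply_one_zero_le_re_trace {M : Matrix (Fin 2) (Fin 2) 𝕜}
    (hM : M.PosSemidef) : 2 * ‖M 1 0‖ ≤ RCLike.re M.trace := by
  obtain ⟨hp, hp_im⟩ := RCLike.nonneg_iff.mp (hM.diag_nonneg (i := 0))
  obtain ⟨hq, -⟩ := RCLike.nonneg_iff.mp (hM.diag_nonneg (i := 1))
  have hdet := (RCLike.nonneg_iff.mp hM.det_nonneg).1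
  have h01 : M 0 1 = star (M 1 0) := by simpa using congr_fun₂ hM.isHermitian.symm 0 1
  rw [det_fin_two, h01, RCLike.star_def, RCLike.conj_mul, map_sub, RCLike.mul_re, hp_im,
    ← RCLike.ofReal_pow, RCLike.ofReal_re] at hdet
  rw [trace_fin_two, map_add]
  nlinarith [sq_nonneg (RCLike.re (M 0 0) - RCLike.re (M 1 1)), norm_nonneg (M 1 0)]

theorem PosSemidef.re_trace_add_norm_apply_zero_one_le {A S : Matrix (Fin 2) (Fin 2) 𝕜}
    (hAS : (S - (2 : 𝕜)⁻¹ • (A + Aᴴ)).PosSemidef) (hA : A 1 0 = 0) (hS : S 1 0 = 0) :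
    RCLike.re A.trace + ‖A 0 1‖ ≤ RCLike.re S.trace := by
  have htrace := hAS.two_mul_norm_apply_one_zero_le_re_trace
  have h10 : (S - (2 : 𝕜)⁻¹ • (A + Aᴴ)) 1 0 = -(2⁻¹ * star (A 0 1)) := by
    simp [hA, hS]
  rw [h10, norm_neg, norm_mul, norm_star, norm_inv, RCLike.norm_two, trace_sub, trace_smul,
    trace_add, trace_conjTranspose, map_sub, smul_eq_mul, RCLike.star_def, RCLike.add_conj] at htrace
  simp only [← mul_assoc, inv_mul_cancel₀ (two_ne_zero' 𝕜), one_mul, RCLike.ofReal_re] at htrace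
  linarith

end Matrix

theorem summable_mul_pow_and_tsum_le_of_le_one_half {c : ℕ → ℝ} {K r : ℝ} (hc : ∀ m, 0 ≤ c m)
    (hcK : ∀ m, 1 ≤ m → c m ≤ K) (hr0 : 0 ≤ r) (hr : r ≤ 1 / 2) :
    Summable (fun m ↦ c m * r ^ m) ∧ ∑' m, c m * r ^ m ≤ c 0 + K := by
  have hK : 0 ≤ K := (hc 1).trans (hcK 1 le_rfl)
  have hr1 : r < 1 := by linarith
  have htail : ∀ m, c (m + 1) * r ^ (m + 1) ≤ K * r * r ^ m := fun m ↦ by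
    rw [pow_succ', ← mul_assoc]
    gcongr
    exact hcK _ m.succ_pos
  have hgeo : Summable (fun m ↦ K * r * r ^ m) :=
    (summable_geometric_of_lt_one hr0 hr1).mul_left _
  have htail_summable : Summable (fun m ↦ c (m + 1) * r ^ (m + 1)) :=
    hgeo.of_nonneg_of_le (fun m ↦ mul_nonneg (hc _) (pow_nonneg hr0 _)) htail
  have hs : Summable (fun m ↦ c m * r ^ m) := (summable_nat_add_iff 1).mp htail_summable
  refine ⟨hs, ?_⟩
  calc ∑' m, c m * r ^ m = c 0 + ∑' m, c (m + 1) * r ^ (m + 1) := by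
        simpa using hs.tsum_eq_zero_add
    _ ≤ c 0 + ∑' m, K * r * r ^ m := add_le_add_right (htail_summable.tsum_le_tsum htail hgeo) _
    _ = c 0 + K * (r / (1 - r)) := by
        rw [tsum_mul_left, tsum_geometric_of_lt_one hr0 hr1, div_eq_mul_inv, mul_assoc]
    _ ≤ c 0 + K := by
        have hr' : r / (1 - r) ≤ 1 := (div_le_one (by linarith)).mpr (by linarith)
        exact add_le_add_right (mul_le_of_le_one_right hK hr') _

theorem bohr_matrix_two_by_two_general
    (A S : Matrix (Fin 2) (Fin 2) ℂ)
    (hA_ut : ∀ i j : Fin 2, j < i → A i j = 0)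
    (hA_tr : 0 ≤ A.trace)
    (hS_ut : ∀ i j : Fin 2, j < i → S i j = 0)
    (hAS : (S - (2 : ℂ)⁻¹ • (A + Aᴴ)).PosSemidef)
    (B : ℕ → Matrix (Fin 2) (Fin 2) ℂ)
    (hB_sut : ∀ m : ℕ, 1 ≤ m → ∀ i j : Fin 2, j ≤ i → B m i j = 0)
    (hB_norm : ∀ m : ℕ, 1 ≤ m → ‖B m‖ ≤ 1)
    (α : ℕ → ℂ)
    (hα0 : α 0 = A.trace)
    (hα : ∀ m : ℕ, 1 ≤ m → α m = (A * (B m)ᴴ).trace)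
    (r : ℝ) (hr0 : 0 ≤ r) (hr1 : r ≤ 1 / 2) :
    Summable (fun m : ℕ => ‖α m‖ * r ^ m) ∧
      ∑' m : ℕ, ‖α m‖ * r ^ m ≤ S.trace.re := by
  have hα_le : ∀ m, 1 ≤ m → ‖α m‖ ≤ ‖A 0 1‖ := fun m hm ↦ by
    rw [hα m hm, trace_mul_conjTranspose_fin_two_of_strictUpper _ _ (hB_sut m hm), norm_mul,
      norm_star]
    exact mul_le_of_le_one_right (norm_nonneg _) ((norm_apply_le_l2_opNorm _ 0 1).trans
      (hB_norm m hm))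
  have hS : A.trace.re + ‖A 0 1‖ ≤ S.trace.re :=
    hAS.re_trace_add_norm_apply_zero_one_le (hA_ut 1 0 zero_lt_one) (hS_ut 1 0 zero_lt_one)
  obtain ⟨hsummable, hle⟩ :=
    summable_mul_pow_and_tsum_le_of_le_one_half (fun m ↦ norm_nonneg (α m)) hα_le hr0 hr1
  rw [hα0, ← Complex.re_eq_norm.mpr hA_tr] at hle
  exact ⟨hsummable, hle.trans hS⟩

/-- **Bohr's inequality for 2×2 upper triangular matrices** (radius `1/2`). -/
theorem bohr_matrix_two_by_two
    (A S : Matrix (Fin 2) (Fin 2) ℂ)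
    (hA_ut : ∀ i j : Fin 2, j < i → A i j = 0)
    (hA_tr : 0 ≤ A.trace)
    (hS_herm : S.IsHermitian)
    (hS_ut : ∀ i j : Fin 2, j < i → S i j = 0)
    (hAS : (S - (2 : ℂ)⁻¹ • (A + Aᴴ)).PosSemidef)
    (B : ℕ → Matrix (Fin 2) (Fin 2) ℂ)
    (hB_sut : ∀ m : ℕ, 1 ≤ m → ∀ i j : Fin 2, j ≤ i → B m i j = 0)
    (hB_norm : ∀ m : ℕ, 1 ≤ m → ‖B m‖ ≤ 1)
    (α : ℕ → ℂ)
    (hα0 : α 0 = A.trace)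
    (hα : ∀ m : ℕ, 1 ≤ m → α m = (A * (B m)ᴴ).trace)
    (r : ℝ) (hr0 : 0 ≤ r) (hr1 : r ≤ 1 / 2) :
    Summable (fun m : ℕ => ‖α m‖ * r ^ m) ∧
      ∑' m : ℕ, ‖α m‖ * r ^ m ≤ S.trace.re :=
  bohr_matrix_two_by_two_general A S hA_ut hA_tr hS_ut hAS B hB_sut hB_norm α hα0 hα r hr0 hr1
end

section
/- Let A ∈ M_3(ℂ) be upper triangular with Tr(A) a nonnegative real number, and let S ∈ M_3(ℂ) be Hermitian and upper triangular (hence diagonal with real entries) with Re(A) ≤ S. Let (A_m)_{m≥1} be a sequence of strictly upper triangular matrices in M_3(ℂ) with ‖A_m‖ ≤ 1 for every m. Set α_0 = Tr(A) and α_m = Tr(A A_m*) for m ≥ 1. Then for every real r with 0 ≤ r ≤ √2 − 1, the series ∑_{m=0}^∞ |α_m| r^m converges and ∑_{m=0}^∞ |α_m| r^m ≤ Tr(S). -/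
open Matrix
open scoped Matrix.Norms.L2Operator ComplexOrder

/-!
Put `M = S - Re A ⪰ 0`. As `S` is diagonal, `A` upper triangular and `A_m` strictly upper
triangular, `Tr (M A_mᴴ) = -α_m / 2`. A strictly upper triangular `3 × 3` contraction has numerical
radius at most `1/√2`, and writing `M` as a sum of rank-one positive matrices turns this into
`√2 |Tr (M A_mᴴ)| ≤ Tr M`, i.e. `|α_m| ≤ √2 (Tr S - Tr A)`. Summing the geometric tail,
`√2 r / (1 - r) ≤ 1` is exactly `r ≤ √2 - 1`.
-/

namespace Matrix

theorem trace_mul_conjTranspose_eq_zero_of_triangular {n R : Type*} [Fintype n] [LinearOrder n]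
    [NonUnitalNonAssocSemiring R] [StarAddMonoid R] {X B : Matrix n n R}
    (hX : ∀ i j, i < j → X i j = 0) (hB : ∀ i j, j ≤ i → B i j = 0) :
    (X * Bᴴ).trace = 0 := by
  refine Finset.sum_eq_zero fun i _ => Finset.sum_eq_zero fun j _ => ?_
  rcases le_or_gt j i with h | h
  · simp [hB i j h]
  · simp [hX i j h]

variable {𝕜 : Type*} [RCLike 𝕜]

theorem sum_norm_sq_mulVec_le {m n : Type*} [Fintype m] [Fintype n] [DecidableEq n]
    {B : Matrix m n 𝕜} (hB : ‖B‖ ≤ 1) (v : n → 𝕜) :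
    ∑ i, ‖(B *ᵥ v) i‖ ^ 2 ≤ ∑ j, ‖v j‖ ^ 2 := by
  set x := (EuclideanSpace.equiv n 𝕜).symm v
  have h : ‖(EuclideanSpace.equiv m 𝕜).symm (B *ᵥ x)‖ ≤ ‖x‖ :=
    (B.l2_opNorm_mulVec x).trans (mul_le_of_le_one_left (norm_nonneg _) hB)
  simpa [x, EuclideanSpace.norm_sq_eq] using pow_le_pow_left₀ (norm_nonneg _) h 2

theorem PosSemidef.mul_norm_trace_mul_conjTranspose_le {n : Type*} [Fintype n]
    {M B : Matrix n n 𝕜} (hM : M.PosSemidef) {c : ℝ} (hc : 0 ≤ c)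
    (hB : ∀ v : n → 𝕜, c * ‖star v ⬝ᵥ (B *ᵥ v)‖ ≤ ∑ i, ‖v i‖ ^ 2) :
    c * ‖(M * Bᴴ).trace‖ ≤ RCLike.re M.trace := by
  obtain ⟨k, v, rfl⟩ := posSemidef_iff_eq_sum_vecMulVec.mp hM
  have h_rank_one (u : n → 𝕜) :
      (vecMulVec u (star u) * Bᴴ).trace = star (star u ⬝ᵥ (B *ᵥ u)) := by
    rw [vecMulVec_mul, trace_vecMulVec, vecMul_conjTranspose, star_star, dotProduct_star,
      dotProduct_comm]
  have h_norm_sq (u : n → 𝕜) : RCLike.re (u ⬝ᵥ star u) = ∑ i, ‖u i‖ ^ 2 := by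
    simp only [dotProduct, Pi.star_apply, RCLike.star_def, RCLike.mul_conj, map_sum,
      RCLike.re_ofReal_pow]
  calc c * ‖((∑ i, vecMulVec (v i) (star (v i))) * Bᴴ).trace‖
      = c * ‖∑ i, star (star (v i) ⬝ᵥ (B *ᵥ v i))‖ := by
        simp only [Finset.sum_mul, trace_sum, h_rank_one]
    _ ≤ ∑ i, c * ‖star (v i) ⬝ᵥ (B *ᵥ v i)‖ := by
        rw [← Finset.mul_sum]
        gcongr
        exact (norm_sum_le _ _).trans_eq (by simp only [norm_star])
    _ ≤ ∑ i, ∑ j, ‖v i j‖ ^ 2 := Finset.sum_le_sum fun i _ => hB (v i)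
    _ = RCLike.re (∑ i, vecMulVec (v i) (star (v i))).trace := by
        simp only [trace_sum, trace_vecMulVec, map_sum, h_norm_sq]

theorem sqrt_two_mul_norm_star_dotProduct_mulVec_le {B : Matrix (Fin 3) (Fin 3) 𝕜}
    (hB : ∀ i j, j ≤ i → B i j = 0) (hB1 : ‖B‖ ≤ 1) (v : Fin 3 → 𝕜) :
    √2 * ‖star v ⬝ᵥ (B *ᵥ v)‖ ≤ ∑ i, ‖v i‖ ^ 2 := by
  have hmulVec (u : Fin 3 → 𝕜) : B *ᵥ u = ![B 0 1 * u 1 + B 0 2 * u 2, B 1 2 * u 2, 0] := by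
    ext i
    fin_cases i <;> simp [mulVec, dotProduct, Fin.sum_univ_three, hB]
  have h_contract := sum_norm_sq_mulVec_le hB1 ![0, v 1, v 2]
  have h_contract' := sum_norm_sq_mulVec_le hB1 ![0, 0, v 2]
  simp only [hmulVec, Fin.sum_univ_three, cons_val_zero, cons_val_one, cons_val, norm_mul,
    norm_zero, mul_zero, zero_add, add_zero, ne_eq, OfNat.ofNat_ne_zero, not_false_eq_true,
    zero_pow] at h_contract h_contract'
  have h_dot : ‖star v ⬝ᵥ (B *ᵥ v)‖
      ≤ ‖v 0‖ * ‖B 0 1 * v 1 + B 0 2 * v 2‖ + ‖v 1‖ * (‖B 1 2‖ * ‖v 2‖) := by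
    simp only [hmulVec, dotProduct, Fin.sum_univ_three, cons_val, mul_zero, add_zero]
    refine (norm_add_le _ _).trans_eq ?_
    simp
  rw [Fin.sum_univ_three]
  -- AM-GM: `√2 a p ≤ a² + p²/2` and `√2 b q ≤ b²/2 + q²`
  have hs : √2 ^ 2 = 2 := Real.sq_sqrt zero_le_two
  nlinarith [sq_nonneg (√2 * ‖v 0‖ - ‖B 0 1 * v 1 + B 0 2 * v 2‖),
    sq_nonneg (‖v 1‖ - √2 * (‖B 1 2‖ * ‖v 2‖)), sq_nonneg (‖B 0 2‖ * ‖v 2‖), Real.sqrt_nonneg 2]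

end Matrix

theorem summable_and_tsum_norm_mul_pow_le {E : Type*} [SeminormedAddCommGroup E] {α : ℕ → E}
    {r K : ℝ} (hr0 : 0 ≤ r) (hr1 : r < 1) (hK : ∀ m, 1 ≤ m → ‖α m‖ ≤ K) :
    Summable (fun m => ‖α m‖ * r ^ m) ∧ ∑' m, ‖α m‖ * r ^ m ≤ ‖α 0‖ + K * r / (1 - r) := by
  have h_tail_le (m : ℕ) : ‖α (m + 1)‖ * r ^ (m + 1) ≤ K * r * r ^ m := by
    calc ‖α (m + 1)‖ * r ^ (m + 1) ≤ K * r ^ (m + 1) := by gcongr; exact hK _ (Nat.le_add_left 1 m)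
      _ = K * r * r ^ m := by ring
  have h_geom : HasSum (fun m : ℕ => K * r * r ^ m) (K * r / (1 - r)) := by
    simpa [div_eq_mul_inv] using (hasSum_geometric_of_lt_one hr0 hr1).mul_left (K * r)
  have h_tail : Summable (fun m => ‖α (m + 1)‖ * r ^ (m + 1)) :=
    h_geom.summable.of_nonneg_of_le (fun m => by positivity) h_tail_le
  have h_sum : Summable (fun m => ‖α m‖ * r ^ m) := (summable_nat_add_iff 1).mp h_tail
  refine ⟨h_sum, ?_⟩
  rw [h_sum.tsum_eq_zero_add, pow_zero, mul_one]
  gcongr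
  exact (h_tail.tsum_le_tsum h_tail_le h_geom.summable).trans_eq h_geom.tsum_eq

theorem norm_trace_mul_conjTranspose_le_of_triangular {A S B : Matrix (Fin 3) (Fin 3) ℂ}
    (hA : ∀ i j, j < i → A i j = 0) (hS : S.IsHermitian) (hS_ut : ∀ i j, j < i → S i j = 0)
    (hAS : (S - (2 : ℂ)⁻¹ • (A + Aᴴ)).PosSemidef) (hB : ∀ i j, j ≤ i → B i j = 0) (hB1 : ‖B‖ ≤ 1) :
    ‖(A * Bᴴ).trace‖ ≤ √2 * (S - (2 : ℂ)⁻¹ • (A + Aᴴ)).trace.re := by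
  have hS_lower : ∀ i j, i < j → S i j = 0 := fun i j h => by
    rw [← hS.apply i j, hS_ut j i h, star_zero]
  have hAH_lower : ∀ i j, i < j → Aᴴ i j = 0 := fun i j h => by
    rw [conjTranspose_apply, hA j i h, star_zero]
  have h_trace : ((S - (2 : ℂ)⁻¹ • (A + Aᴴ)) * Bᴴ).trace = -(2⁻¹ * (A * Bᴴ).trace) := by
    rw [sub_mul, smul_mul, add_mul, trace_sub, trace_smul, trace_add,
      trace_mul_conjTranspose_eq_zero_of_triangular hS_lower hB,
      trace_mul_conjTranspose_eq_zero_of_triangular hAH_lower hB]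
    simp
  have h := hAS.mul_norm_trace_mul_conjTranspose_le (Real.sqrt_nonneg 2)
    (sqrt_two_mul_norm_star_dotProduct_mulVec_le hB hB1)
  rw [h_trace, norm_neg, norm_mul, norm_inv, Complex.norm_ofNat, RCLike.re_to_complex] at h
  calc ‖(A * Bᴴ).trace‖ = √2 * (√2 * (2⁻¹ * ‖(A * Bᴴ).trace‖)) := by
        rw [← mul_assoc, Real.mul_self_sqrt zero_le_two]; ring
    _ ≤ _ := by gcongr

/-- **Bohr's inequality for 3×3 upper triangular matrices** (radius `√2 - 1`). -/
theorem bohr_matrix_three_by_three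
    (A S : Matrix (Fin 3) (Fin 3) ℂ)
    (hA_ut : ∀ i j : Fin 3, j < i → A i j = 0)
    (hA_tr : 0 ≤ A.trace)
    (hS_herm : S.IsHermitian)
    (hS_ut : ∀ i j : Fin 3, j < i → S i j = 0)
    (hAS : (S - (2 : ℂ)⁻¹ • (A + Aᴴ)).PosSemidef)
    (B : ℕ → Matrix (Fin 3) (Fin 3) ℂ)
    (hB_sut : ∀ m : ℕ, 1 ≤ m → ∀ i j : Fin 3, j ≤ i → B m i j = 0)
    (hB_norm : ∀ m : ℕ, 1 ≤ m → ‖B m‖ ≤ 1)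
    (α : ℕ → ℂ)
    (hα0 : α 0 = A.trace)
    (hα : ∀ m : ℕ, 1 ≤ m → α m = (A * (B m)ᴴ).trace)
    (r : ℝ) (hr0 : 0 ≤ r) (hr1 : r ≤ Real.sqrt 2 - 1) :
    Summable (fun m : ℕ => ‖α m‖ * r ^ m) ∧
      ∑' m : ℕ, ‖α m‖ * r ^ m ≤ S.trace.re := by
  set M := S - (2 : ℂ)⁻¹ • (A + Aᴴ)
  have hs : √2 ^ 2 = 2 := Real.sq_sqrt zero_le_two
  have hM_nonneg : 0 ≤ M.trace.re := (Complex.nonneg_iff.mp hAS.trace_nonneg).1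
  have hα0_norm : ‖α 0‖ = A.trace.re := by
    rw [hα0]
    exact (congrArg Complex.re (Complex.eq_coe_norm_of_nonneg hA_tr)).symm
  have hM_trace : M.trace.re = S.trace.re - A.trace.re := by
    rw [trace_sub, trace_smul, trace_add, trace_conjTranspose, RCLike.star_def, Complex.add_conj,
      smul_eq_mul, Complex.sub_re, Complex.ofReal_mul, ← mul_assoc]
    norm_num
  have hα_le (m : ℕ) (hm : 1 ≤ m) : ‖α m‖ ≤ √2 * M.trace.re := hα m hm ▸
    norm_trace_mul_conjTranspose_le_of_triangular hA_ut hS_herm hS_ut hAS (hB_sut m hm)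
      (hB_norm m hm)
  have hr_lt_one : r < 1 := by nlinarith [Real.sqrt_nonneg 2]
  obtain ⟨h_sum, h_le⟩ := summable_and_tsum_norm_mul_pow_le hr0 hr_lt_one hα_le
  refine ⟨h_sum, h_le.trans ?_⟩
  -- `(√2 - 1) (√2 + 1) = 1`
  have h_radius : √2 * r ≤ 1 - r := by
    nlinarith [mul_le_mul_of_nonneg_left hr1 (by positivity : (0 : ℝ) ≤ √2 + 1)]
  calc ‖α 0‖ + √2 * M.trace.re * r / (1 - r) ≤ A.trace.re + M.trace.re := by
        rw [hα0_norm, add_le_add_iff_left, div_le_iff₀ (sub_pos.2 hr_lt_one)]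
        nlinarith [mul_le_mul_of_nonneg_left h_radius hM_nonneg]
    _ = S.trace.re := by rw [hM_trace]; ring
end

section
/- For every n ≥ 2 there exist matrices A, S, B ∈ M_n(ℂ) with A upper triangular, Tr(A) a nonnegative real number, S Hermitian diagonal with real entries satisfying Re(A) ≤ S, and B strictly upper triangular with ‖B‖ ≤ 1, such that for every real r with n/(3n−2) < r < 1 one has Tr(A) + ∑_{m=1}^∞ |Tr(A B*)| r^m > Tr(S). (Explicit witnesses: A has 1 on the diagonal and −2 in every entry strictly above the diagonal, S = 2·I_n, and B is the shift with 1 on the superdiagonal and 0 elsewhere; then Tr(A B*) = −2(n−1).) -/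
/-!
Take `A = I - 2N`, where `N` has ones strictly above the diagonal, `S = 2I` and the shift `B`.
Then `Re A = 2I - J` with `J` the all-ones matrix, so `S - Re A = J ≥ 0`, while `Tr A = n`,
`Tr S = 2n` and `Tr (A B*) = -2(n - 1)` collects the superdiagonal of `A`. The series sums to
`2(n - 1) r / (1 - r)`, and `n + 2(n - 1) r / (1 - r) > 2n` is equivalent to `r > n / (3n - 2)`.
-/

open Matrix
open scoped Matrix.Norms.L2Operator ComplexOrder

namespace PEquiv

lemma toMatrix_ofSet {α n : Type*} [Zero α] [One α] [DecidableEq n] (s : Set n)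
    [DecidablePred (· ∈ s)] : ((ofSet s).toMatrix : Matrix n n α) = diagonal (s.indicator 1) := by
  ext i j
  by_cases h : i = j
  · subst h
    by_cases hi : i ∈ s <;> simp [hi]
  · simp [h, Ne.symm h]

variable {𝕜 : Type*} [RCLike 𝕜] {m n : Type*} [DecidableEq m] [DecidableEq n]

lemma conjTranspose_toMatrix (f : m ≃. n) :
    (f.toMatrix : Matrix m n 𝕜)ᴴ = f.symm.toMatrix := by
  ext i j
  simp only [conjTranspose_apply, toMatrix_apply, mem_iff_mem f]
  split_ifs <;> simp

/-- `f.toMatrixᴴ * f.toMatrix` is a diagonal `0/1` projection, so the C⋆-identity bounds the norm. -/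
lemma l2_opNorm_toMatrix_le_one [Fintype m] [Fintype n] (f : m ≃. n) :
    ‖(f.toMatrix : Matrix m n 𝕜)‖ ≤ 1 := by
  have h : ‖(f.toMatrix : Matrix m n 𝕜)‖ * ‖(f.toMatrix : Matrix m n 𝕜)‖ ≤ 1 := by
    rw [← l2_opNorm_conjTranspose_mul_self, conjTranspose_toMatrix, ← toMatrix_trans,
      symm_trans_self, toMatrix_ofSet, l2_opNorm_diagonal]
    refine pi_norm_le_iff_of_nonneg zero_le_one |>.mpr fun i => ?_
    rw [Set.indicator_apply]
    split_ifs <;> simp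
  nlinarith [norm_nonneg (f.toMatrix : Matrix m n 𝕜)]

end PEquiv

namespace Fin

def succPEquiv (n : ℕ) : Fin n ≃. Fin n where
  toFun i := if h : (i : ℕ) + 1 < n then some ⟨i + 1, h⟩ else none
  invFun j := if h : 0 < (j : ℕ) then some ⟨j - 1, by omega⟩ else none
  inv i j := by
    split_ifs <;> simp only [Option.some.injEq, Fin.ext_iff, false_iff, iff_false] <;> omega

lemma mem_succPEquiv_iff {n : ℕ} {i j : Fin n} : j ∈ succPEquiv n i ↔ (j : ℕ) = i + 1 := by
  simp only [succPEquiv, PEquiv.coe_mk, Option.mem_def]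
  split_ifs <;> simp only [Option.some.injEq, Fin.ext_iff, false_iff] <;> omega

lemma toMatrix_succPEquiv_apply_of_le {α : Type*} [Zero α] [One α] {n : ℕ} {i j : Fin n}
    (h : j ≤ i) : ((succPEquiv n).toMatrix : Matrix (Fin n) (Fin n) α) i j = 0 := by
  rw [PEquiv.toMatrix_apply, if_neg (by rw [mem_succPEquiv_iff]; omega)]

end Fin

def bohrTestMatrix (n : ℕ) : Matrix (Fin n) (Fin n) ℂ :=
  of fun i j => if i = j then 1 else if i < j then -2 else 0

section bohrTestMatrix

variable {n : ℕ}

lemma bohrTestMatrix_apply_of_lt {i j : Fin n} (h : j < i) : bohrTestMatrix n i j = 0 := by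
  simp [bohrTestMatrix, h.ne', h.not_gt]

variable (n)

lemma trace_bohrTestMatrix : (bohrTestMatrix n).trace = n := by
  simp [bohrTestMatrix, trace]

lemma posSemidef_diagonal_two_sub_re_bohrTestMatrix :
    (diagonal (fun _ => 2) - (2 : ℂ)⁻¹ • (bohrTestMatrix n + (bohrTestMatrix n)ᴴ)).PosSemidef := by
  have hones : diagonal (fun _ => 2) - (2 : ℂ)⁻¹ • (bohrTestMatrix n + (bohrTestMatrix n)ᴴ) =
      vecMulVec 1 (star 1) := by
    ext i j
    rcases lt_trichotomy i j with h | rfl | h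
    · simp [bohrTestMatrix, h, h.ne, h.ne', h.not_gt, vecMulVec]
    · norm_num [bohrTestMatrix, vecMulVec]
    · simp [bohrTestMatrix, h, h.ne, h.ne', h.not_gt, vecMulVec]
  rw [hones]
  exact posSemidef_vecMulVec_self_star 1

lemma trace_bohrTestMatrix_mul_conjTranspose_succPEquiv :
    (bohrTestMatrix n * (Fin.succPEquiv n).toMatrixᴴ).trace = -2 * ((n - 1 : ℕ) : ℂ) := by
  have hdiag (i : Fin n) :
      (bohrTestMatrix n * (Fin.succPEquiv n).toMatrixᴴ : Matrix (Fin n) (Fin n) ℂ) i i =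
        if (i : ℕ) + 1 < n then -2 else 0 := by
    rw [PEquiv.conjTranspose_toMatrix, PEquiv.mul_toMatrix_apply, PEquiv.symm_symm]
    simp only [Fin.succPEquiv, PEquiv.coe_mk]
    split_ifs with h
    · have hlt : i < ⟨i + 1, h⟩ := Fin.lt_def.mpr (Nat.lt_succ_self i)
      simp [bohrTestMatrix, hlt, hlt.ne]
    · rfl
  simp only [trace, diag, hdiag, Finset.sum_ite, Finset.sum_const_zero, Finset.sum_const, add_zero,
    Nat.add_lt_iff_lt_sub_right, Fin.card_filter_val_lt, min_eq_right (Nat.sub_le n 1),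
    nsmul_eq_mul, mul_comm]

end bohrTestMatrix

lemma tsum_mul_pow_succ {r : ℝ} (c : ℝ) (h₀ : 0 ≤ r) (h₁ : r < 1) :
    ∑' m : ℕ, c * r ^ (m + 1) = c * r / (1 - r) := by
  simp_rw [pow_succ', ← mul_assoc]
  rw [tsum_mul_left, tsum_geometric_of_lt_one h₀ h₁, div_eq_mul_inv]

lemma lt_add_tsum_mul_pow_succ {x r : ℝ} (hx : 1 ≤ x) (hxr : x / (3 * x - 2) < r) (hr : r < 1) :
    2 * x < x + ∑' m : ℕ, 2 * (x - 1) * r ^ (m + 1) := by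
  have hden : 0 < 3 * x - 2 := by linarith
  have hxr' : x < r * (3 * x - 2) := (div_lt_iff₀ hden).mp hxr
  have hr₀ : 0 < r := lt_trans (by positivity) hxr
  rw [tsum_mul_pow_succ _ hr₀.le hr, ← sub_lt_iff_lt_add', lt_div_iff₀ (by linarith)]
  nlinarith

/-- The optimal bound for `r` in Bohr's inequality on `n × n` upper triangular
matrices is at most `n / (3n - 2)`. -/
theorem bohr_matrix_optimality_general (n : ℕ) (hn : 2 ≤ n) :
    ∃ A S B : Matrix (Fin n) (Fin n) ℂ,
      (∀ i j : Fin n, j < i → A i j = 0) ∧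
      0 ≤ A.trace ∧
      S.IsHermitian ∧
      (∀ i j : Fin n, i ≠ j → S i j = 0) ∧
      (∀ i : Fin n, (S i i).im = 0) ∧
      (S - (2 : ℂ)⁻¹ • (A + Aᴴ)).PosSemidef ∧
      (∀ i j : Fin n, j ≤ i → B i j = 0) ∧
      ‖B‖ ≤ 1 ∧
      ∀ r : ℝ, (n : ℝ) / (3 * n - 2) < r → r < 1 →
        A.trace.re + ∑' m : ℕ, ‖(A * Bᴴ).trace‖ * r ^ (m + 1) >
          S.trace.re := by
  have hAB : ‖(bohrTestMatrix n * (Fin.succPEquiv n).toMatrixᴴ).trace‖ = 2 * ((n : ℝ) - 1) := by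
    rw [trace_bohrTestMatrix_mul_conjTranspose_succPEquiv, norm_mul, Complex.norm_natCast,
      Nat.cast_sub (by omega)]
    norm_num
  refine ⟨bohrTestMatrix n, diagonal fun _ => 2, (Fin.succPEquiv n).toMatrix,
    fun _ _ => bohrTestMatrix_apply_of_lt, by simp [trace_bohrTestMatrix],
    isHermitian_diagonal_of_self_adjoint _ (IsSelfAdjoint.ofNat 2),
    fun _ _ => diagonal_apply_ne _, fun _ => by simp,
    posSemidef_diagonal_two_sub_re_bohrTestMatrix n,
    fun _ _ => Fin.toMatrix_succPEquiv_apply_of_le, PEquiv.l2_opNorm_toMatrix_le_one _,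
    fun r hr hr₁ => ?_⟩
  rw [hAB, trace_bohrTestMatrix, trace_diagonal]
  simp only [Complex.natCast_re, Finset.sum_const, Finset.card_univ, Fintype.card_fin,
    nsmul_eq_mul, Complex.mul_re, Complex.re_ofNat, Complex.natCast_im, Complex.im_ofNat, mul_zero,
    sub_zero, gt_iff_lt]
  linarith [lt_add_tsum_mul_pow_succ (by exact_mod_cast (by omega : 1 ≤ n)) hr hr₁]
end

section
/- Let f : ℂ → ℂ be analytic on the open unit disk 𝔻 = {z : |z| < 1} with |f(z)| ≤ 1 for all z ∈ 𝔻, and let a_k denote the Taylor coefficients of f at 0 (so a_k = f^{(k)}(0)/k! and f(z) = ∑_{k=0}^∞ a_k z^k on 𝔻). Then for every real r with 0 ≤ r ≤ 1/3, ∑_{k=0}^∞ |a_k| r^k ≤ 1. -/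
/-!
Carathéodory's coefficient inequality does the work. If `Re f ≤ M` on the circle `|z| = ρ`, the
nonnegative function `M - Re f` has mean `M - Re f(0)` there, while its `k`-th Fourier coefficient
(`k ≥ 1`) is `-ρ^k a_k / 2`, because `Re f = (f + conj f) / 2` and `z^k f` is holomorphic and
vanishes at `0`. Hence `ρ^k |a_k| ≤ 2 (M - Re a_0)`. Rotating `f` so that `f 0 ≥ 0` and taking
`M = 1` gives Wiener's bound `|a_k| ≤ 2 (1 - |a_0|)`, and then
`∑ |a_k| r^k ≤ |a_0| + 2 (1 - |a_0|) r / (1 - r) ≤ 1` for `r ≤ 1/3`.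
-/

open Complex Metric Real ComplexConjugate
open scoped Nat

noncomputable def taylorCoeff (f : ℂ → ℂ) (k : ℕ) : ℂ := iteratedDeriv k f 0 / k !

theorem norm_circleAverage_le {E : Type*} [NormedAddCommGroup E] [NormedSpace ℝ E]
    (f : ℂ → E) (c : ℂ) (R : ℝ) :
    ‖circleAverage f c R‖ ≤ circleAverage (fun z ↦ ‖f z‖) c R := by
  rw [circleAverage_def, circleAverage_def, norm_smul, smul_eq_mul,
    Real.norm_of_nonneg (by positivity)]
  gcongr
  exact intervalIntegral.norm_integral_le_integral_norm two_pi_pos.le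

theorem circleAverage_conj (f : ℂ → ℂ) (c : ℂ) (R : ℝ) :
    circleAverage (fun z ↦ conj (f z)) c R = conj (circleAverage f c R) := by
  simp only [circleAverage_def, intervalIntegral, integral_conj, map_sub, Complex.real_smul,
    map_mul, conj_ofReal]

section TaylorCoeff

variable {f : ℂ → ℂ}

section Circle

variable {ρ : ℝ}

theorem circleAverage_pow_mul_eq_zero (hρ : 0 < ρ) (hf : DiffContOnCl ℂ f (ball 0 ρ)) {k : ℕ}
    (hk : k ≠ 0) : circleAverage (fun z ↦ z ^ k * f z) 0 ρ = 0 := by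
  have hg : DiffContOnCl ℂ (fun z ↦ z ^ k * f z) (ball 0 |ρ|) := by
    rw [abs_of_pos hρ]
    exact (differentiable_pow k).diffContOnCl.smul hf
  simp [hg.circleAverage, hk]

theorem circleAverage_inv_pow_mul (hρ : 0 < ρ) (hf : DiffContOnCl ℂ f (ball 0 ρ)) (k : ℕ) :
    circleAverage (fun z ↦ (z ^ k)⁻¹ * f z) 0 ρ = taylorCoeff f k := by
  rw [circleAverage_eq_circleIntegral hρ.ne']
  have := hf.circleIntegral_one_div_sub_center_pow_smul hρ k
  simp only [sub_zero, smul_eq_mul, one_div] at this ⊢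
  simp_rw [← mul_assoc, ← mul_inv, ← pow_succ', this, taylorCoeff]
  field_simp

theorem circleAverage_conj_pow_mul (hρ : 0 < ρ) (hf : DiffContOnCl ℂ f (ball 0 ρ)) (k : ℕ) :
    circleAverage (fun z ↦ conj z ^ k * f z) 0 ρ = ρ ^ (2 * k) * taylorCoeff f k := by
  rw [← circleAverage_inv_pow_mul hρ hf, ← smul_eq_mul, ← circleAverage_fun_smul]
  refine circleAverage_congr_sphere fun z hz ↦ ?_
  rw [abs_of_pos hρ, mem_sphere_zero_iff_norm] at hz
  have hz0 : z ≠ 0 := norm_pos_iff.mp (hz ▸ hρ)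
  have hconj : conj z = ρ ^ 2 * z⁻¹ := by
    rw [eq_mul_inv_iff_mul_eq₀ hz0, mul_comm, Complex.mul_conj', hz]
  simp only [hconj, smul_eq_mul, mul_pow, ← pow_mul, inv_pow]
  ring

theorem circleAverage_conj_pow_mul_re (hρ : 0 < ρ) (hf : DiffContOnCl ℂ f (ball 0 ρ)) {k : ℕ}
    (hk : k ≠ 0) :
    circleAverage (fun z ↦ conj z ^ k * (f z).re) 0 ρ = ρ ^ (2 * k) / 2 * taylorCoeff f k := by
  have hfs : ContinuousOn f (sphere 0 ρ) := hf.continuousOn_ball.mono sphere_subset_closedBall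
  have hsplit : (fun z ↦ conj z ^ k * (f z).re) =
      fun z ↦ (2⁻¹ : ℂ) • (conj z ^ k * f z + conj (z ^ k * f z)) := by
    ext z
    rw [Complex.re_eq_add_conj, map_mul, map_pow, smul_eq_mul]
    ring
  rw [hsplit, circleAverage_fun_smul, circleAverage_fun_add, circleAverage_conj,
    circleAverage_conj_pow_mul hρ hf, circleAverage_pow_mul_eq_zero hρ hf hk, map_zero,
    smul_eq_mul]
  · ring
  · exact ContinuousOn.circleIntegrable hρ.le (by fun_prop)
  · exact ContinuousOn.circleIntegrable hρ.le (by fun_prop)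

theorem circleAverage_re (hρ : 0 < ρ) (hf : DiffContOnCl ℂ f (ball 0 ρ)) :
    circleAverage (fun z ↦ (f z).re) 0 ρ = (f 0).re := by
  have hfs : ContinuousOn f (sphere 0 ρ) := hf.continuousOn_ball.mono sphere_subset_closedBall
  have := reCLM.circleAverage_comp_comm (hfs.circleIntegrable hρ.le)
  rwa [DiffContOnCl.circleAverage (by rwa [abs_of_pos hρ])] at this

theorem norm_taylorCoeff_mul_pow_le_of_re_le_on_sphere (hρ : 0 < ρ)
    (hf : DiffContOnCl ℂ f (ball 0 ρ)) {M : ℝ} (hM : ∀ z ∈ sphere (0 : ℂ) ρ, (f z).re ≤ M)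
    {k : ℕ} (hk : k ≠ 0) : ‖taylorCoeff f k‖ * ρ ^ k ≤ 2 * (M - (f 0).re) := by
  have hfs : ContinuousOn f (sphere 0 ρ) := hf.continuousOn_ball.mono sphere_subset_closedBall
  set g : ℂ → ℂ := fun z ↦ conj z ^ k * ((M - (f z).re : ℝ) : ℂ)
  have hg_avg : circleAverage g 0 ρ = -(ρ ^ (2 * k) / 2 * taylorCoeff f k) := by
    have hconj_pow : circleAverage (fun z ↦ conj z ^ k) 0 ρ = 0 := by
      have := circleAverage_pow_mul_eq_zero hρ (diffContOnCl_const (c := (1 : ℂ))) hk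
      simp only [mul_one] at this
      simp only [← map_pow, circleAverage_conj, this, map_zero]
    have hsplit : g = fun z ↦ (M : ℂ) • conj z ^ k - conj z ^ k * (f z).re := by
      ext z
      simp only [g, ofReal_sub, smul_eq_mul]
      ring
    rw [hsplit, circleAverage_fun_sub, circleAverage_fun_smul, hconj_pow,
      circleAverage_conj_pow_mul_re hρ hf hk, smul_zero, zero_sub]
    · exact ContinuousOn.circleIntegrable hρ.le (by fun_prop)
    · exact ContinuousOn.circleIntegrable hρ.le (by fun_prop)
  have hg_norm_avg : circleAverage (fun z ↦ ‖g z‖) 0 ρ = ρ ^ k * (M - (f 0).re) := by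
    have hre_int : CircleIntegrable (fun z ↦ (f z).re) 0 ρ :=
      ContinuousOn.circleIntegrable hρ.le (by fun_prop)
    calc circleAverage (fun z ↦ ‖g z‖) 0 ρ
        = circleAverage (fun z ↦ ρ ^ k • (M - (f z).re)) 0 ρ := by
          refine circleAverage_congr_sphere fun z hz ↦ ?_
          rw [abs_of_pos hρ] at hz
          rw [norm_mul, norm_pow, Complex.norm_conj, norm_real,
            Real.norm_of_nonneg (sub_nonneg.2 (hM z hz)), mem_sphere_zero_iff_norm.1 hz,
            smul_eq_mul]
      _ = ρ ^ k * (M - (f 0).re) := by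
          rw [circleAverage_fun_smul, circleAverage_fun_sub (circleIntegrable_const _ _ _) hre_int,
            circleAverage_const, circleAverage_re hρ hf, smul_eq_mul]
  have key : ρ ^ k * (ρ ^ k / 2 * ‖taylorCoeff f k‖) ≤ ρ ^ k * (M - (f 0).re) := by
    calc ρ ^ k * (ρ ^ k / 2 * ‖taylorCoeff f k‖) = ‖circleAverage g 0 ρ‖ := by
          rw [hg_avg, norm_neg, norm_mul, norm_div, norm_pow, norm_real,
            Real.norm_of_nonneg hρ.le, Complex.norm_two]
          ring
      _ ≤ _ := hg_norm_avg ▸ norm_circleAverage_le g 0 ρ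
  have := le_of_mul_le_mul_left key (by positivity)
  linarith

end Circle

open Filter Topology in
theorem norm_taylorCoeff_mul_pow_le_of_re_le {R M : ℝ} (hR : 0 < R)
    (hf : DifferentiableOn ℂ f (ball 0 R)) (hM : ∀ z ∈ ball (0 : ℂ) R, (f z).re ≤ M) {k : ℕ}
    (hk : k ≠ 0) : ‖taylorCoeff f k‖ * R ^ k ≤ 2 * (M - (f 0).re) := by
  have h_near : ∀ᶠ ρ in 𝓝[<] R, ‖taylorCoeff f k‖ * ρ ^ k ≤ 2 * (M - (f 0).re) := by
    filter_upwards [Ioo_mem_nhdsLT hR] with ρ ⟨hρ0, hρR⟩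
    have hsub : closedBall (0 : ℂ) ρ ⊆ ball 0 R := closedBall_subset_ball hρR
    exact norm_taylorCoeff_mul_pow_le_of_re_le_on_sphere hρ0 (hf.diffContOnCl_ball hsub)
      (fun z hz ↦ hM z (hsub (sphere_subset_closedBall hz))) hk
  exact le_of_tendsto
    (((continuous_const.mul (continuous_pow k)).tendsto R).mono_left nhdsWithin_le_nhds) h_near

theorem norm_taylorCoeff_mul_pow_le_of_norm_le_one {R : ℝ} (hR : 0 < R)
    (hf : DifferentiableOn ℂ f (ball 0 R)) (hf₁ : ∀ z ∈ ball (0 : ℂ) R, ‖f z‖ ≤ 1) {k : ℕ}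
    (hk : k ≠ 0) : ‖taylorCoeff f k‖ * R ^ k ≤ 2 * (1 - ‖f 0‖) := by
  set c := exp (↑(-arg (f 0)) * I)
  have hc : ‖c‖ = 1 := norm_exp_ofReal_mul_I _
  have hcf0 : c * f 0 = ‖f 0‖ := by
    conv_lhs => rw [← norm_mul_exp_arg_mul_I (f 0)]
    rw [mul_left_comm, ← Complex.exp_add, ofReal_neg, ← add_mul, neg_add_cancel, zero_mul,
      Complex.exp_zero, mul_one]
  have := norm_taylorCoeff_mul_pow_le_of_re_le hR (hf.const_mul c)
    (fun z hz ↦ (re_le_norm _).trans (by rw [norm_mul, hc, one_mul]; exact hf₁ z hz)) hk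
  simpa [taylorCoeff, mul_div_assoc, hc, hcf0] using this

end TaylorCoeff

theorem tsum_mul_pow_le_one_of_forall_ne_zero_le {b : ℕ → ℝ} (hb : ∀ k, 0 ≤ b k)
    (hb_le : ∀ k ≠ 0, b k ≤ 2 * (1 - b 0)) {r : ℝ} (hr₀ : 0 ≤ r) (hr₁ : r ≤ 1 / 3) :
    ∑' k, b k * r ^ k ≤ 1 := by
  have hb₀ : 0 ≤ 1 - b 0 := by linarith [hb 1, hb_le 1 one_ne_zero]
  have hr : r < 1 := by linarith
  have hgeom := summable_geometric_of_lt_one hr₀ hr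
  have hs : Summable fun k ↦ b k * r ^ k := by
    refine Summable.of_nonneg_of_le (fun k ↦ mul_nonneg (hb k) (pow_nonneg hr₀ k)) (fun k ↦ ?_)
      (hgeom.mul_left (b 0 + 2 * (1 - b 0)))
    gcongr
    rcases eq_or_ne k 0 with rfl | hk
    · linarith
    · linarith [hb_le k hk, hb 0]
  have htail : ∑' k, b (k + 1) * r ^ (k + 1) ≤ 2 * (1 - b 0) * (r * (1 - r)⁻¹) := by
    calc ∑' k, b (k + 1) * r ^ (k + 1) ≤ ∑' k, 2 * (1 - b 0) * r * r ^ k := by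
          refine Summable.tsum_le_tsum (fun k ↦ ?_) ((summable_nat_add_iff 1).mpr hs)
            (hgeom.mul_left _)
          rw [pow_succ', ← mul_assoc]
          gcongr
          exact hb_le _ k.succ_ne_zero
      _ = 2 * (1 - b 0) * (r * (1 - r)⁻¹) := by
          rw [tsum_mul_left, tsum_geometric_of_lt_one hr₀ hr, mul_assoc]
  have hratio : r * (1 - r)⁻¹ ≤ 1 / 2 := by
    rw [mul_inv_le_iff₀ (by linarith)]
    linarith
  rw [hs.tsum_eq_zero_add, pow_zero, mul_one]
  nlinarith [mul_le_mul_of_nonneg_left hratio (mul_nonneg zero_le_two hb₀)]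

/-- **Classical Bohr inequality**: if `f` is analytic on the open unit disk and
bounded by `1` there, then `∑ |a_k| r^k ≤ 1` for `0 ≤ r ≤ 1/3`, where `a_k` are
the Taylor coefficients of `f` at `0`. -/
theorem bohr_inequality_classical (f : ℂ → ℂ)
    (hf : AnalyticOnNhd ℂ f (Metric.ball 0 1))
    (hf_bdd : ∀ z ∈ Metric.ball (0 : ℂ) 1, ‖f z‖ ≤ 1)
    (a : ℕ → ℂ) (ha : ∀ k : ℕ, a k = iteratedDeriv k f 0 / (k.factorial : ℂ))
    (r : ℝ) (hr0 : 0 ≤ r) (hr1 : r ≤ 1 / 3) :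
    ∑' k : ℕ, ‖a k‖ * r ^ k ≤ 1 := by
  have ha₀ : a 0 = f 0 := by simp [ha]
  refine tsum_mul_pow_le_one_of_forall_ne_zero_le (fun k ↦ norm_nonneg _) (fun k hk ↦ ?_) hr0 hr1
  have hak : a k = taylorCoeff f k := ha k
  simpa [hak, ha₀] using
    norm_taylorCoeff_mul_pow_le_of_norm_le_one one_pos hf.differentiableOn hf_bdd hk
end

section
/- Let m be the normalized Haar (Lebesgue) measure on the circle group 𝕋 = ℝ/2πℤ. Let g ∈ L^1(m) with ĝ(k) = 0 for all k < 0, and let h be an essentially bounded measurable function on 𝕋 with ĥ(k) = 0 for all k ≤ 0. Then ∫ h·g dm = 0. -/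
/-!
The correlation `ψ x = ∫ h (x + y) g y dy` is continuous, because translation is continuous on
`L¹` and `h ∈ L^∞` pairs continuously with `L¹`. By Fubini its `n`-th Fourier coefficient is
`ĥ n * ĝ (-n)`, and one of the two factors vanishes for every `n`. A continuous function on the
circle with vanishing Fourier coefficients is zero, so `∫ h g = ψ 0 = 0`.
-/

open MeasureTheory Real AddCircle

instance : Fact (0 < 2 * π) := ⟨by positivity⟩

open scoped ENNReal

noncomputable def correlation {G : Type*} [AddCommGroup G] [MeasurableSpace G] (μ : Measure G)
    (h g : G → ℂ) (x : G) : ℂ :=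
  ∫ y, h (x + y) * g y ∂μ

section Continuity

variable {G : Type*} [AddCommGroup G] [MeasurableSpace G] [TopologicalSpace G]
  [IsTopologicalAddGroup G] [BorelSpace G] {μ : Measure G} [μ.IsAddLeftInvariant] {h g : G → ℂ}

theorem correlation_eq_integral_mul_neg_add (x : G) :
    correlation μ h g x = ∫ u, h u * g (-x + u) ∂μ := by
  rw [correlation, ← integral_add_left_eq_self (μ := μ) _ (-x)]
  simp

theorem continuous_correlation [IsLocallyFiniteMeasure μ] [μ.InnerRegularCompactLTTop] {C : ℝ}
    (hh_meas : AEStronglyMeasurable h μ) (hC : ∀ᵐ x ∂μ, ‖h x‖ ≤ C) (hg : Integrable g μ) :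
    Continuous (correlation μ h g) := by
  have hh : MemLp h ∞ μ := memLp_top_of_bound hh_meas C hC
  have hg₁ : MemLp g 1 μ := memLp_one_iff_integrable.2 hg
  have hpair : correlation μ h g = fun x : G ↦ (ContinuousLinearMap.mul ℂ ℂ).lpPairing μ ∞ 1
      (hh.toLp h) (DomAddAct.mk (-x) +ᵥ hg₁.toLp g) := by
    ext x
    rw [ContinuousLinearMap.lpPairing_eq_integral, correlation_eq_integral_mul_neg_add]
    refine integral_congr_ae ?_
    filter_upwards [hh.coeFn_toLp, DomAddAct.vadd_Lp_ae_eq (DomAddAct.mk (-x)) (hg₁.toLp g),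
      (measurePreserving_add_left μ (-x)).quasiMeasurePreserving.ae hg₁.coeFn_toLp]
      with u hhu hgu hgu'
    simp_all
  have : Fact ((1 : ℝ≥0∞) ≠ ∞) := ⟨ENNReal.one_ne_top⟩
  rw [hpair]
  exact (ContinuousLinearMap.continuous _).comp
    ((DomAddAct.continuous_mk.comp continuous_neg).vadd continuous_const)

end Continuity

section Fourier

variable {T : ℝ} [Fact (0 < T)]

theorem fourierCoeff_comp_add {E : Type*} [NormedAddCommGroup E] [NormedSpace ℂ E]
    (f : AddCircle T → E) (y : AddCircle T) (n : ℤ) :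
    fourierCoeff (fun x ↦ f (x + y)) n = fourier n y • fourierCoeff f n := by
  simp only [fourierCoeff]
  rw [← integral_add_right_eq_self (μ := haarAddCircle) _ (-y), ← integral_smul]
  refine integral_congr_ae (.of_forall fun x ↦ ?_)
  simp only [neg_add_cancel_right, smul_smul, fourier_apply, smul_add, toCircle_add,
    Circle.coe_mul, smul_neg, neg_smul, neg_neg, mul_comm]

theorem fourierCoeff_correlation {h g : AddCircle T → ℂ} {C : ℝ}
    (hh_meas : AEStronglyMeasurable h haarAddCircle) (hC : ∀ᵐ x ∂haarAddCircle, ‖h x‖ ≤ C)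
    (hg : Integrable g haarAddCircle) (n : ℤ) :
    fourierCoeff (correlation haarAddCircle h g) n = fourierCoeff h n * fourierCoeff g (-n) := by
  have hF : Integrable (fun p : AddCircle T × AddCircle T ↦
      fourier (-n) p.1 * h (p.1 + p.2) * g p.2) (haarAddCircle.prod haarAddCircle) := by
    refine (hg.comp_snd haarAddCircle).bdd_mul (c := C) ?_ ?_
    · exact (map_continuous _).comp continuous_fst |>.aestronglyMeasurable.mul
        (hh_meas.comp_quasiMeasurePreserving (quasiMeasurePreserving_add _ _))
    · filter_upwards [(quasiMeasurePreserving_add haarAddCircle haarAddCircle).ae hC] with p hp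
      simpa [Circle.norm_coe] using hp
  calc fourierCoeff (correlation haarAddCircle h g) n
      = ∫ x, ∫ y, fourier (-n) x * h (x + y) * g y ∂haarAddCircle ∂haarAddCircle := by
        simp only [fourierCoeff, correlation, smul_eq_mul, ← integral_const_mul, mul_assoc]
    _ = ∫ y, fourierCoeff (fun x ↦ h (x + y)) n * g y ∂haarAddCircle := by
        rw [integral_integral_swap hF]
        simp only [fourierCoeff, smul_eq_mul, ← integral_mul_const]
    _ = fourierCoeff h n * fourierCoeff g (-n) := by
        simp only [fourierCoeff_comp_add, smul_eq_mul, mul_assoc,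
          mul_left_comm (fourier n _) (fourierCoeff h n), integral_const_mul]
        simp only [fourierCoeff, neg_neg, smul_eq_mul]

theorem ContinuousMap.eq_zero_of_fourierCoeff_eq_zero (f : C(AddCircle T, ℂ))
    (hf : ∀ n, fourierCoeff f n = 0) : f = 0 := by
  refine ContinuousMap.toLp_injective (E := ℂ) (p := 2) (𝕜 := ℂ) haarAddCircle ?_
  rw [map_zero]
  refine fourierBasis.repr.injective ?_
  ext n
  rw [fourierBasis_repr, fourierCoeff_toLp, hf, map_zero]
  rfl

end Fourier

/-- If `g ∈ H¹(𝕋)` and `h ∈ H^∞₀(𝕋)` then `∫ h g dm = 0`. -/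
theorem integral_mul_eq_zero_of_hardy
    (g h : AddCircle (2 * π) → ℂ)
    (hg_int : Integrable g haarAddCircle)
    (hg : ∀ k : ℤ, k < 0 → fourierCoeff g k = 0)
    (hh_meas : AEStronglyMeasurable h haarAddCircle)
    (hh_bdd : ∃ C : ℝ, ∀ᵐ x ∂(haarAddCircle : Measure (AddCircle (2 * π))),
      ‖h x‖ ≤ C)
    (hh : ∀ k : ℤ, k ≤ 0 → fourierCoeff h k = 0) :
    ∫ x, h x * g x ∂haarAddCircle = 0 := by
  obtain ⟨C, hC⟩ := hh_bdd
  let ψ : C(AddCircle (2 * π), ℂ) :=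
    ⟨correlation haarAddCircle h g, continuous_correlation hh_meas hC hg_int⟩
  have hψ : ψ = 0 := ψ.eq_zero_of_fourierCoeff_eq_zero fun n ↦ by
    rw [ContinuousMap.coe_mk, fourierCoeff_correlation hh_meas hC hg_int]
    rcases le_or_gt n 0 with hn | hn
    · rw [hh n hn, zero_mul]
    · rw [hg (-n) (by omega), mul_zero]
  simpa [ψ, correlation] using congr($hψ 0)
end

section
/- Let A ∈ M_3(ℂ) be upper triangular, let S ∈ M_3(ℂ) be Hermitian and upper triangular (hence diagonal with real entries) with Re(A) ≤ S, and let B ∈ M_3(ℂ) be strictly upper triangular with ‖B‖ ≤ 1. Then |Tr(A B*)| ≤ √2·(Tr(S) − Re(Tr(A))). -/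
open Matrix
open scoped Matrix.Norms.L2Operator ComplexOrder

/-!
Put `M = S - Re A ⪰ 0` and `p i = √(M i i)`, so that `∑ p i ^ 2 = Tr S - Re Tr A`. Since `A` and `S`
are upper triangular and `S` is Hermitian, `A i j = -2 M i j` for `i < j`, hence
`|A i j| ≤ 2 p i p j`, and `|Tr (A Bᴴ)| ≤ 2 (p₀ p₁ |b₀₁| + p₀ p₂ |b₀₂| + p₁ p₂ |b₁₂|)`.
Testing the contraction `B` on `(0, p₁, p₂)`, with phases that align the first row, gives
`(|b₀₁| p₁ + |b₀₂| p₂)² + |b₁₂|² p₂² ≤ p₁² + p₂²`, and `|b₁₂| ≤ 1`. Two weighted AM-GM inequalities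
then give the constant `√2`.
-/

lemma Matrix.PosSemidef.norm_apply_sq_le {n : Type*} [Fintype n] {M : Matrix n n ℂ}
    (hM : M.PosSemidef) (i j : n) : ‖M i j‖ ^ 2 ≤ (M i i).re * (M j j).re := by
  have hdet := (hM.submatrix ![i, j]).det_nonneg
  rw [det_fin_two] at hdet
  simp only [submatrix_apply, cons_val_zero, cons_val_one] at hdet
  have hii := Complex.nonneg_iff.1 (hM.diag_nonneg (i := i))
  have hjj := Complex.nonneg_iff.1 (hM.diag_nonneg (i := j))
  rw [← hM.isHermitian.apply j i, Complex.star_def, Complex.mul_conj',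
    ← Complex.re_add_im (M i i), ← Complex.re_add_im (M j j), ← hii.2, ← hjj.2] at hdet
  have hre := (Complex.nonneg_iff.1 hdet).1
  simp only [Complex.ofReal_zero, zero_mul, add_zero, Complex.sub_re, Complex.mul_re,
    Complex.ofReal_re, Complex.ofReal_im, mul_zero, sub_zero, sub_nonneg] at hre
  exact_mod_cast hre

lemma Matrix.PosSemidef.norm_apply_le_sqrt_mul_sqrt {n : Type*} [Fintype n] {M : Matrix n n ℂ}
    (hM : M.PosSemidef) (i j : n) : ‖M i j‖ ≤ √(M i i).re * √(M j j).re := by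
  rw [← Real.sqrt_mul (Complex.nonneg_iff.1 hM.diag_nonneg).1]
  exact Real.le_sqrt_of_sq_le (hM.norm_apply_sq_le i j)

lemma Matrix.norm_trace_mul_conjTranspose_le {n 𝕜 : Type*} [Fintype n] [RCLike 𝕜]
    (A B : Matrix n n 𝕜) : ‖(A * Bᴴ).trace‖ ≤ ∑ i, ∑ j, ‖A i j‖ * ‖B i j‖ := by
  simp only [trace, diag_apply, mul_apply, conjTranspose_apply]
  refine (norm_sum_le _ _).trans (Finset.sum_le_sum fun i _ => (norm_sum_le _ _).trans ?_)
  simp only [norm_mul, norm_star, le_refl]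

lemma Matrix.sum_norm_mulVec_sq_le {m n 𝕜 : Type*} [Fintype m] [Fintype n] [DecidableEq n]
    [RCLike 𝕜] {B : Matrix m n 𝕜} (hB : ‖B‖ ≤ 1) (v : n → 𝕜) :
    ∑ i, ‖(B *ᵥ v) i‖ ^ 2 ≤ ∑ j, ‖v j‖ ^ 2 := by
  have h : ‖(EuclideanSpace.equiv m 𝕜).symm (B *ᵥ v)‖ ≤ ‖WithLp.toLp 2 v‖ :=
    (B.l2_opNorm_mulVec _).trans (mul_le_of_le_one_left (norm_nonneg _) hB)
  simpa [EuclideanSpace.norm_sq_eq] using pow_le_pow_left₀ (norm_nonneg _) h 2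

lemma Matrix.norm_apply_le_l2_opNorm_s14 {m n 𝕜 : Type*} [Fintype m] [Fintype n]
    [DecidableEq n] [RCLike 𝕜] (B : Matrix m n 𝕜) (i : m) (j : n) : ‖B i j‖ ≤ ‖B‖ :=
  calc ‖B i j‖ = ‖(B *ᵥ Pi.single j 1) i‖ := by simp
    _ ≤ ‖(EuclideanSpace.equiv m 𝕜).symm (B *ᵥ Pi.single j 1)‖ :=
      PiLp.norm_apply_le ((EuclideanSpace.equiv m 𝕜).symm (B *ᵥ Pi.single j 1)) i
    _ ≤ ‖B‖ * ‖EuclideanSpace.single j (1 : 𝕜)‖ := B.l2_opNorm_mulVec (EuclideanSpace.single j 1)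
    _ = ‖B‖ := by simp

lemma Complex.exists_norm_eq_one_mul_eq_norm (b : ℂ) : ∃ u : ℂ, ‖u‖ = 1 ∧ b * u = ‖b‖ := by
  refine ⟨exp (↑(-arg b) * I), norm_exp_ofReal_mul_I _, ?_⟩
  conv_lhs => rw [← norm_mul_exp_arg_mul_I b]
  rw [mul_assoc, ← exp_add]
  push_cast
  simp

lemma two_mul_add_le_sqrt_two_mul {a b c t s : ℝ} (h : t ^ 2 + s ^ 2 ≤ b ^ 2 + c ^ 2)
    (hs : s ^ 2 ≤ c ^ 2) : 2 * (a * t + b * s) ≤ √2 * (a ^ 2 + b ^ 2 + c ^ 2) := by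
  have h2 : √2 ^ 2 = 2 := Real.sq_sqrt zero_le_two
  have h0 : 0 < √2 := by positivity
  nlinarith [sq_nonneg (√2 * a - t), sq_nonneg (b - √2 * s)]

lemma sum_mul_norm_le_of_strictUpper_fin_three {B : Matrix (Fin 3) (Fin 3) ℂ}
    (hB : ∀ i j, j ≤ i → B i j = 0) (hB1 : ‖B‖ ≤ 1) {p : Fin 3 → ℝ} (hp : ∀ i, 0 ≤ p i) :
    ∑ i, ∑ j, 2 * (p i * p j) * ‖B i j‖ ≤ √2 * ∑ i, p i ^ 2 := by
  set x := ‖B 0 1‖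
  set y := ‖B 0 2‖
  set z := ‖B 1 2‖
  have hcol : (x * p 1 + y * p 2) ^ 2 + (z * p 2) ^ 2 ≤ p 1 ^ 2 + p 2 ^ 2 := by
    obtain ⟨u₁, hu₁, hBu₁⟩ := Complex.exists_norm_eq_one_mul_eq_norm (B 0 1)
    obtain ⟨u₂, hu₂, hBu₂⟩ := Complex.exists_norm_eq_one_mul_eq_norm (B 0 2)
    have hrow : B 0 1 * (u₁ * p 1) + B 0 2 * (u₂ * p 2) = ((x * p 1 + y * p 2 : ℝ) : ℂ) := by
      rw [← mul_assoc, ← mul_assoc, hBu₁, hBu₂]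
      push_cast
      ring
    have hv := sum_norm_mulVec_sq_le hB1 ![0, u₁ * p 1, u₂ * p 2]
    simp only [mulVec, dotProduct, Fin.sum_univ_three, cons_val_zero, cons_val_one, cons_val,
      hB 1 1 le_rfl, hB 2 1 (by decide), hB 2 2 le_rfl, mul_zero, zero_mul, zero_add, add_zero,
      hrow, norm_zero, norm_mul, hu₁, hu₂, one_mul, Complex.norm_real, Real.norm_eq_abs, sq_abs,
      abs_of_nonneg (hp _)] at hv
    simpa using hv
  have hz : (z * p 2) ^ 2 ≤ p 2 ^ 2 := by
    rw [mul_pow]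
    exact mul_le_of_le_one_left (sq_nonneg _)
      (pow_le_one₀ (norm_nonneg _) ((B.norm_apply_le_l2_opNorm_s14 1 2).trans hB1))
  have hsum : ∑ i, ∑ j, 2 * (p i * p j) * ‖B i j‖ =
      2 * (p 0 * (x * p 1 + y * p 2) + p 1 * (z * p 2)) := by
    simp only [Fin.sum_univ_three, hB 0 0 le_rfl, hB 1 0 (by decide), hB 1 1 le_rfl,
      hB 2 0 (by decide), hB 2 1 (by decide), hB 2 2 le_rfl, norm_zero, mul_zero, zero_add, add_zero]
    ring
  rw [hsum, Fin.sum_univ_three]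
  exact two_mul_add_le_sqrt_two_mul hcol hz

lemma sub_half_smul_add_conjTranspose_apply {n : Type*} {A S : Matrix n n ℂ} {i j : n}
    (hS : S i j = 0) (hA : A j i = 0) :
    (S - (2 : ℂ)⁻¹ • (A + Aᴴ)) i j = -(2⁻¹ * A i j) := by
  simp [hS, hA]

lemma re_trace_sub_half_smul_add_conjTranspose {n : Type*} [Fintype n] (A S : Matrix n n ℂ) :
    (S - (2 : ℂ)⁻¹ • (A + Aᴴ)).trace.re = S.trace.re - A.trace.re := by
  rw [trace_sub, trace_smul, trace_add, trace_conjTranspose, smul_eq_mul, Complex.star_def,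
    Complex.add_conj]
  simp

/-- The improved coefficient estimate in the 3×3 case:
`|Tr(A Bᴴ)| ≤ √2 (Tr S − Re Tr A)`. -/
theorem bohr_coefficient_estimate_three_by_three
    (A S B : Matrix (Fin 3) (Fin 3) ℂ)
    (hA_ut : ∀ i j : Fin 3, j < i → A i j = 0)
    (hS_herm : S.IsHermitian)
    (hS_ut : ∀ i j : Fin 3, j < i → S i j = 0)
    (hAS : (S - (2 : ℂ)⁻¹ • (A + Aᴴ)).PosSemidef)
    (hB_sut : ∀ i j : Fin 3, j ≤ i → B i j = 0)
    (hB_norm : ‖B‖ ≤ 1) :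
    ‖(A * Bᴴ).trace‖ ≤ Real.sqrt 2 * (S.trace.re - A.trace.re) := by
  set M := S - (2 : ℂ)⁻¹ • (A + Aᴴ)
  set p : Fin 3 → ℝ := fun i => √(M i i).re
  have hA_le : ∀ i j, ‖A i j‖ * ‖B i j‖ ≤ 2 * (p i * p j) * ‖B i j‖ := by
    intro i j
    rcases lt_or_ge i j with hij | hji
    · have hS : S i j = 0 := by rw [← hS_herm.apply, hS_ut j i hij, star_zero]
      have hMij : M i j = -(2⁻¹ * A i j) :=
        sub_half_smul_add_conjTranspose_apply hS (hA_ut j i hij)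
      have hM := hAS.norm_apply_le_sqrt_mul_sqrt i j
      rw [hMij, norm_neg, norm_mul] at hM
      norm_num at hM
      gcongr
      linarith
    · simp [hB_sut i j hji]
  have hp_sq : ∀ i, p i ^ 2 = (M i i).re := fun i =>
    Real.sq_sqrt (Complex.nonneg_iff.1 hAS.diag_nonneg).1
  calc ‖(A * Bᴴ).trace‖ ≤ ∑ i, ∑ j, ‖A i j‖ * ‖B i j‖ := norm_trace_mul_conjTranspose_le A B
    _ ≤ ∑ i, ∑ j, 2 * (p i * p j) * ‖B i j‖ :=
      Finset.sum_le_sum fun i _ => Finset.sum_le_sum fun j _ => hA_le i j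
    _ ≤ √2 * ∑ i, p i ^ 2 :=
      sum_mul_norm_le_of_strictUpper_fin_three hB_sut hB_norm fun i => Real.sqrt_nonneg _
    _ = √2 * (S.trace.re - A.trace.re) := by
      rw [← re_trace_sub_half_smul_add_conjTranspose, trace, Complex.re_sum]
      simp only [hp_sq, diag_apply, M]
end

section
/- Let a, b, u, w be real numbers with a ≥ 0, b ≥ 0, 0 ≤ u ≤ 1, and 0 ≤ w ≤ 1. Then √2·( a·u + a·b·√((1 − u²)(1 − w²)) + b·w ) ≤ a² + b² + 1. -/
/-- The elementary calculus inequality used in the 3×3 case of the matrix Bohr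
inequality. -/
theorem sqrt_two_mul_le_sq_add_sq_add_one (a b u w : ℝ)
    (ha : 0 ≤ a) (hb : 0 ≤ b) (hu0 : 0 ≤ u) (hu1 : u ≤ 1) (hw0 : 0 ≤ w)
    (hw1 : w ≤ 1) :
    Real.sqrt 2 * (a * u + a * b * Real.sqrt ((1 - u ^ 2) * (1 - w ^ 2)) + b * w) ≤
      a ^ 2 + b ^ 2 + 1 := by
  set s := Real.sqrt (1 - u ^ 2) with hs
  set t := Real.sqrt (1 - w ^ 2) with ht
  have hu2 : (0:ℝ) ≤ 1 - u ^ 2 := by nlinarith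
  have hw2 : (0:ℝ) ≤ 1 - w ^ 2 := by nlinarith
  have hst : Real.sqrt ((1 - u ^ 2) * (1 - w ^ 2)) = s * t := Real.sqrt_mul hu2 _
  have hs2 : s ^ 2 = 1 - u ^ 2 := Real.sq_sqrt hu2
  have ht2 : t ^ 2 = 1 - w ^ 2 := Real.sq_sqrt hw2
  have hsn : 0 ≤ s := Real.sqrt_nonneg _
  have htn : 0 ≤ t := Real.sqrt_nonneg _
  have h2 : Real.sqrt 2 ^ 2 = 2 := Real.sq_sqrt (by norm_num)
  have h2n : 0 ≤ Real.sqrt 2 := Real.sqrt_nonneg _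
  have h2le : Real.sqrt 2 ≤ 2 := by nlinarith
  rw [hst]
  have hq1 : (a * u * Real.sqrt 2) ^ 2 = 2 * (a ^ 2 * u ^ 2) := by
    rw [mul_pow, h2]; ring
  have hq2 : (b * w * Real.sqrt 2) ^ 2 = 2 * (b ^ 2 * w ^ 2) := by
    rw [mul_pow, h2]; ring
  have h1 : Real.sqrt 2 * (a * u) ≤ a ^ 2 * u ^ 2 + 1 / 2 := by
    nlinarith [sq_nonneg (a * u * Real.sqrt 2 - 1), hq1]
  have h3 : Real.sqrt 2 * (b * w) ≤ b ^ 2 * w ^ 2 + 1 / 2 := by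
    nlinarith [sq_nonneg (b * w * Real.sqrt 2 - 1), hq2]
  have habst : 0 ≤ a * b * (s * t) :=
    mul_nonneg (mul_nonneg ha hb) (mul_nonneg hsn htn)
  have h4a : Real.sqrt 2 * (a * b * (s * t)) ≤ 2 * (a * b * (s * t)) :=
    mul_le_mul_of_nonneg_right h2le habst
  have h4b : 2 * (a * b * (s * t)) ≤ a ^ 2 * s ^ 2 + b ^ 2 * t ^ 2 := by
    nlinarith [sq_nonneg (a * s - b * t)]
  have e1 : a ^ 2 * s ^ 2 = a ^ 2 * (1 - u ^ 2) := by rw [hs2]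
  have e2 : b ^ 2 * t ^ 2 = b ^ 2 * (1 - w ^ 2) := by rw [ht2]
  have expand : Real.sqrt 2 * (a * u + a * b * (s * t) + b * w) =
      Real.sqrt 2 * (a * u) + Real.sqrt 2 * (a * b * (s * t)) +
        Real.sqrt 2 * (b * w) := by ring
  have e3 : a ^ 2 * (1 - u ^ 2) = a ^ 2 - a ^ 2 * u ^ 2 := by ring
  have e4 : b ^ 2 * (1 - w ^ 2) = b ^ 2 - b ^ 2 * w ^ 2 := by ring
  rw [expand]
  linarith [h1, h3, h4a, h4b, e1, e2, e3, e4]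
end
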